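/- For $h\in(0,1/2]$ and $q\in(0,1]$ let $c_k(h,q)=\sqrt{1-\exp\big(-\tfrac{2h^2}{1-h}(qk^2+\tfrac{1}{q})\big)}\,\exp\big(-hqk^2-\tfrac{h}{q}\big)$ for $k\in\mathbb{Z}$. Then for every fixed $h\in(0,1/2]$ there exist constants $K>0$ and $q_0\in(0,1]$ such that for all $q\in(0,q_0)$: $\Big|\sum_{k\in\mathbb{Z}}c_k(h,q)\,c_{k+1}(h,q) - e^{-2h/q-hq/2}\sqrt{\frac{\pi}{2hq}}\Big| \le K\,q^{-1/2}\,\exp\Big(-\frac{2h}{q}-\frac{2h^2}{q(1-h)}\Big)$. -/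

import Mathlib

open Filter

noncomputable section

section AuxA
open Real Filter

lemma summable_exp_shift {t : ℝ} (ht : 0 < t) (b : ℝ) :
    Summable (fun n : ℤ => Real.exp (-t * ((n:ℝ) + b)^2)) := by
  have hmaj := (summable_pow_mul_jacobiTheta₂_term_bound (t * |b| / π) (T := t/π)
    (by positivity) 0).mul_left (Real.exp (t*b^2))
  refine Summable.of_nonneg_of_le (fun n => (Real.exp_pos _).le) (fun n => ?_) hmaj
  simp only [pow_zero, one_mul]
  rw [← Real.exp_add, Real.exp_le_exp]
  have hπ : (0:ℝ) < π := Real.pi_pos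
  have habs : ((|n| : ℤ) : ℝ) = |(n:ℝ)| := by push_cast; ring
  rw [habs]
  set A := |(n:ℝ)| with hA
  set B := |b| with hB
  have h1 : -(t * (2*(n:ℝ)*b)) ≤ t * (2 * B * A) := by
    calc -(t * (2*(n:ℝ)*b)) ≤ |t * (2*(n:ℝ)*b)| := neg_le_abs _
      _ = t * (2 * B * A) := by
          rw [abs_mul, abs_of_pos ht, abs_mul, abs_mul]
          rw [abs_of_nonneg (by norm_num : (0:ℝ) ≤ 2)]
          ring
  have h2 : -(t * b^2) ≤ t * b^2 := by nlinarith [sq_nonneg b, ht.le]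
  have key : π * (t/π * (n:ℝ)^2 - 2*(t * B/π)*A) = t*(n:ℝ)^2 - t*(2 * B * A) := by
    field_simp
  nlinarith [h1, h2, key]

lemma alt_tail {t : ℝ} (ht : 0 < t) (ht1 : t ≤ 1) :
    |(∑' n : ℤ, ((-1:ℝ)^n * Real.exp (-(π^2) * (n:ℝ)^2 / t))) - 1|
      ≤ 4 * Real.exp (-(π^2)/t) := by
  have hπ : (0:ℝ) < π := Real.pi_pos
  set c : ℝ := π^2 / t with hc
  have hc0 : 0 < c := by positivity
  have hc1 : 1 ≤ c := by
    rw [hc]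
    rw [le_div_iff₀ ht]
    nlinarith [Real.pi_gt_three]
  set F : ℤ → ℝ := fun n => (-1:ℝ)^n * Real.exp (-(π^2) * (n:ℝ)^2 / t) with hF
  have habs : ∀ n : ℤ, |F n| = Real.exp (-c * ((n:ℝ) + 0)^2) := by
    intro n
    rw [hF]
    have h1 : |(-1:ℝ)^n| = 1 := by
      rcases Int.even_or_odd n with he|ho
      · rw [he.neg_one_zpow, abs_one]
      · rw [ho.neg_one_zpow, abs_neg, abs_one]
    rw [abs_mul, h1, one_mul, Real.abs_exp, add_zero]
    congr 1
    rw [hc]; ring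
  have hsumabs : Summable (fun n : ℤ => |F n|) := by
    refine (summable_exp_shift hc0 0).congr fun n => (habs n).symm
  have hsum : Summable F := hsumabs.of_abs
  have hinj1 : Function.Injective (fun n : ℕ => (n:ℤ) + 1) := by
    intro a b hab; simpa using hab
  have hinj2 : Function.Injective (fun n : ℕ => -((n:ℤ) + 1)) := by
    intro a b hab; simpa using hab
  have hp : Summable (fun n : ℕ => F ((n:ℤ) + 1)) := hsum.comp_injective hinj1
  have hm : Summable (fun n : ℕ => F (-((n:ℤ) + 1))) := hsum.comp_injective hinj2
  have hdec := tsum_of_add_one_of_neg_add_one hp hm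
  have hF0 : F 0 = 1 := by simp [hF]
  set r : ℝ := Real.exp (-c) with hr
  have hr0 : 0 < r := Real.exp_pos _
  have hrhalf : r ≤ 1/2 := by
    rw [hr]
    have h1 : Real.exp (-c) ≤ Real.exp (-1) := by
      apply Real.exp_le_exp.mpr; linarith
    have h2 : Real.exp (-1) ≤ 1/2 := by
      have h3 : (2:ℝ) ≤ Real.exp 1 := by have := Real.add_one_le_exp (1:ℝ); linarith
      rw [Real.exp_neg]
      exact (inv_le_comm₀ (Real.exp_pos 1) one_half_pos).mpr (by norm_num; linarith)
    linarith
  have hr1 : r < 1 := by linarith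
  have hgeom : ∑' n : ℕ, r^(n+1) = r * (1-r)⁻¹ := by
    simp_rw [pow_succ, mul_comm (r ^ _) r]
    rw [tsum_mul_left, tsum_geometric_of_lt_one hr0.le hr1]
  have hgeom2 : r * (1-r)⁻¹ ≤ 2 * r := by
    rw [mul_comm (2:ℝ) r]
    apply mul_le_mul_of_nonneg_left _ hr0.le
    rw [inv_le_comm₀ (by linarith) (by norm_num)]
    linarith
  have hsum_geom : Summable (fun n : ℕ => r^(n+1)) := by
    apply Summable.comp_injective (summable_geometric_of_lt_one hr0.le hr1)
      (fun a b hab => by omega)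
  have hbound : ∀ (s : ℤ → ℤ), (∀ n : ℕ, (s n).natAbs = n + 1) → ∀ n : ℕ,
      |F (s n)| ≤ r^(n+1) := by
    intro s hs n
    rw [habs, add_zero, hr, ← Real.exp_nat_mul, Real.exp_le_exp]
    have h1 : ((s n : ℝ))^2 = ((n:ℝ)+1)^2 := by
      have := hs n
      have : |(s n : ℝ)| = (n:ℝ) + 1 := by
        rw [← Int.cast_abs, Int.abs_eq_natAbs, this]; push_cast; ring
      rw [← sq_abs, this]
    rw [h1]
    have hn1 : (1:ℝ) ≤ (n:ℝ) + 1 := by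
      have : (0:ℝ) ≤ (n:ℝ) := Nat.cast_nonneg n
      linarith
    push_cast
    nlinarith [mul_le_mul_of_nonneg_left (by nlinarith : ((n:ℝ)+1) ≤ ((n:ℝ)+1)^2) hc0.le]
  have hP : |∑' n : ℕ, F ((n:ℤ)+1)| ≤ 2 * r := by
    calc |∑' n : ℕ, F ((n:ℤ)+1)| ≤ ∑' n : ℕ, r^(n+1) := by
          rw [← Real.norm_eq_abs]
          apply tsum_of_norm_bounded hsum_geom.hasSum
          intro n
          rw [Real.norm_eq_abs]
          exact hbound (fun n => (n:ℤ)+1) (fun n => by show ((n:ℤ)+1).natAbs = n+1; omega) n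
      _ = r * (1-r)⁻¹ := hgeom
      _ ≤ 2 * r := hgeom2
  have hM : |∑' n : ℕ, F (-((n:ℤ)+1))| ≤ 2 * r := by
    calc |∑' n : ℕ, F (-((n:ℤ)+1))| ≤ ∑' n : ℕ, r^(n+1) := by
          rw [← Real.norm_eq_abs]
          apply tsum_of_norm_bounded hsum_geom.hasSum
          intro n
          rw [Real.norm_eq_abs]
          exact hbound (fun n => -((n:ℤ)+1)) (fun n => by show (-((n:ℤ)+1)).natAbs = n+1; omega) n
      _ = r * (1-r)⁻¹ := hgeom
      _ ≤ 2 * r := hgeom2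
  rw [hdec, hF0]
  have : (∑' n : ℕ, F ((n:ℤ)+1)) + 1 + (∑' n : ℕ, F (-((n:ℤ)+1))) - 1
      = (∑' n : ℕ, F ((n:ℤ)+1)) + (∑' n : ℕ, F (-((n:ℤ)+1))) := by ring
  rw [this]
  calc |(∑' n : ℕ, F ((n:ℤ)+1)) + (∑' n : ℕ, F (-((n:ℤ)+1)))|
      ≤ |∑' n : ℕ, F ((n:ℤ)+1)| + |∑' n : ℕ, F (-((n:ℤ)+1))| := abs_add_le _ _
    _ ≤ 2*r + 2*r := add_le_add hP hM
    _ = 4 * Real.exp (-(π^2)/t) := by rw [hr, hc]; ring_nf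

end AuxA

section AuxB
open Real Filter Complex

lemma theta_half {t : ℝ} (ht : 0 < t) :
    ∑' n : ℤ, Real.exp (-t * ((n:ℝ) + 1/2)^2)
      = Real.sqrt (π/t) * ∑' n : ℤ, ((-1:ℝ)^n * Real.exp (-(π^2) * (n:ℝ)^2 / t)) := by
  have hπ : (0:ℝ) < π := Real.pi_pos
  have ha : 0 < (((t/π : ℝ)):ℂ).re := by simpa using div_pos ht hπ
  have key := Complex.tsum_exp_neg_quadratic ha (((-(t/(2*π)) : ℝ)):ℂ)
  have e1 : ∀ n : ℤ, Complex.exp (-(π:ℂ) * ((t/π:ℝ):ℂ) * (n:ℂ) ^ 2 +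
        2 * (π:ℂ) * ((-(t/(2*π)):ℝ):ℂ) * (n:ℂ))
      = Complex.exp ((t:ℂ)/4) * ((Real.exp (-t * ((n:ℝ) + 1/2)^2) : ℝ) : ℂ) := by
    intro n
    rw [Complex.ofReal_exp, ← Complex.exp_add]
    congr 1
    have hπ0 : (π:ℂ) ≠ 0 := Complex.ofReal_ne_zero.mpr hπ.ne'
    push_cast
    field_simp
    ring
  have e2 : ∀ n : ℤ, Complex.exp (-(π:ℂ) / ((t/π:ℝ):ℂ) *
        ((n:ℂ) + Complex.I * ((-(t/(2*π)):ℝ):ℂ)) ^ 2)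
      = ((((-1:ℝ)^n * Real.exp (-(π^2) * (n:ℝ)^2 / t) : ℝ)) : ℂ) * Complex.exp ((t:ℂ)/4) := by
    intro n
    have hπ0 : (π:ℂ) ≠ 0 := Complex.ofReal_ne_zero.mpr hπ.ne'
    have ht0 : (t:ℂ) ≠ 0 := Complex.ofReal_ne_zero.mpr ht.ne'
    have harg : -(π:ℂ) / ((t/π:ℝ):ℂ) * ((n:ℂ) + Complex.I * ((-(t/(2*π)):ℝ):ℂ)) ^ 2
        = ((-(π^2) * (n:ℝ)^2 / t : ℝ) : ℂ) + (n:ℂ) * ((π:ℂ) * Complex.I) + (t:ℂ)/4 := by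
      push_cast
      field_simp
      ring_nf
      simp [Complex.I_sq]
    rw [harg, Complex.exp_add, Complex.exp_add, Complex.exp_int_mul, Complex.exp_pi_mul_I]
    push_cast
    ring
  simp_rw [e1, e2] at key
  rw [tsum_mul_left, tsum_mul_right] at key
  have hc : Complex.exp ((t:ℂ)/4) ≠ 0 := Complex.exp_ne_zero _
  have key2 : (∑' n : ℤ, ((Real.exp (-t * ((n:ℝ) + 1/2)^2) : ℝ) : ℂ))
      = 1 / ((t/π:ℝ):ℂ) ^ (1/2:ℂ) *
        ∑' n : ℤ, ((((-1:ℝ)^n * Real.exp (-(π^2) * (n:ℝ)^2 / t) : ℝ)) : ℂ) :=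
    mul_left_cancel₀ hc (key.trans (by ring))
  have hA : (1:ℂ) / (((t/π:ℝ):ℂ) ^ (1/2:ℂ)) = ((Real.sqrt (π/t) : ℝ) : ℂ) := by
    have h1 : ((t/π:ℝ):ℂ) ^ (1/2:ℂ) = (((t/π)^(1/2:ℝ) : ℝ) : ℂ) := by
      rw [show (1/2:ℂ) = ((1/2:ℝ):ℂ) by norm_num,
        ← Complex.ofReal_cpow (div_pos ht hπ).le]
    rw [h1, ← Real.sqrt_eq_rpow]
    have h2 : Real.sqrt (π/t) = (Real.sqrt (t/π))⁻¹ := by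
      rw [← Real.sqrt_inv, inv_div]
    rw [h2]
    push_cast
    ring
  rw [hA] at key2
  rw [← Complex.ofReal_tsum, ← Complex.ofReal_tsum, ← Complex.ofReal_mul] at key2
  exact_mod_cast key2

end AuxB

/-- The coefficients `c_k(h,q) = √(1-exp(-(2h²/(1-h))(qk²+1/q)))·exp(-hqk²-h/q)`. -/
def ck (h q : ℝ) (k : ℤ) : ℝ :=
  Real.sqrt (1 - Real.exp (-(2 * h ^ 2 / (1 - h) * (q * (k:ℝ) ^ 2 + 1 / q)))) *
    Real.exp (-(h * q * (k:ℝ) ^ 2) - h / q)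

section MainSec
open Real Filter

set_option maxHeartbeats 1000000 in
/-- Asymptotics of the first trigonometric moment `∑ₖ c_k c_{k+1}` as `q → 0` for fixed `h`. -/
theorem trig_moment_asymptotics_q (h : ℝ) (hh : h ∈ Set.Ioc (0:ℝ) (1/2)) :
    ∃ K > 0, ∃ q₀ ∈ Set.Ioc (0:ℝ) 1, ∀ q ∈ Set.Ioo (0:ℝ) q₀,
      |(∑' k : ℤ, ck h q k * ck h q (k + 1)) -
          Real.exp (-(2 * h / q) - h * q / 2) * Real.sqrt (Real.pi / (2 * h * q))| ≤
        K * (1 / Real.sqrt q) * Real.exp (-(2 * h / q) - 2 * h ^ 2 / (q * (1 - h))) := by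
  obtain ⟨h0, h12⟩ := hh
  have h1h : 0 < 1 - h := by linarith
  refine ⟨8 * Real.sqrt (π / (2*h)), by positivity, 1, ⟨zero_lt_one, le_rfl⟩, ?_⟩
  rintro q ⟨hq0, hq1⟩
  have hπ : (0:ℝ) < π := Real.pi_pos
  obtain ⟨a, ha_def⟩ : ∃ x : ℝ, x = 2 * h^2 / (1 - h) := ⟨_, rfl⟩
  have ha0 : 0 < a := by rw [ha_def]; positivity
  have ha1 : a ≤ 1 := by
    rw [ha_def, div_le_one h1h]; nlinarith
  have ht0 : 0 < 2*h*q := by positivity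
  have ht1 : 2*h*q ≤ 1 := by nlinarith
  obtain ⟨P, hP_def⟩ : ∃ P : ℤ → ℝ,
      P = fun k : ℤ => 1 - Real.exp (-(2 * h ^ 2 / (1 - h) * (q * (k:ℝ) ^ 2 + 1 / q))) := ⟨_, rfl⟩
  obtain ⟨E, hE_def⟩ : ∃ E : ℤ → ℝ,
      E = fun k : ℤ => Real.exp (-(h * q * (k:ℝ) ^ 2) - h / q) := ⟨_, rfl⟩
  have hP0 : ∀ k, 0 ≤ P k := by
    intro k
    have harg : -(2 * h ^ 2 / (1 - h) * (q * (k:ℝ) ^ 2 + 1 / q)) ≤ 0 := by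
      have : 0 ≤ 2 * h ^ 2 / (1 - h) * (q * (k:ℝ) ^ 2 + 1 / q) := by positivity
      linarith
    have := Real.exp_le_exp.mpr harg
    rw [Real.exp_zero] at this
    simp only [hP_def]; linarith
  have hP1 : ∀ k, P k ≤ 1 := by
    intro k; simp only [hP_def]
    have := Real.exp_pos (-(2 * h ^ 2 / (1 - h) * (q * (k:ℝ) ^ 2 + 1 / q)))
    linarith
  have hPc : ∀ k, 1 - P k ≤ Real.exp (-(a/q)) := by
    intro k; simp only [hP_def, sub_sub_cancel]
    apply Real.exp_le_exp.mpr
    have h1 : a * (1/q) ≤ 2 * h ^ 2 / (1 - h) * (q * (k:ℝ) ^ 2 + 1 / q) := by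
      rw [ha_def]
      apply mul_le_mul_of_nonneg_left _ (by positivity)
      have : 0 ≤ q * (k:ℝ)^2 := by positivity
      linarith
    have h2 : a * (1/q) = a / q := by ring
    linarith [h2 ▸ h1]
  have hterm : ∀ k : ℤ, ck h q k * ck h q (k+1) = Real.sqrt (P k * P (k+1)) * (E k * E (k+1)) := by
    intro k
    rw [Real.sqrt_mul (hP0 k)]
    simp only [ck, hP_def, hE_def]
    ring
  have hgform : ∀ k : ℤ, E k * E (k+1)
      = Real.exp (-(2*h/q) - h*q/2) * Real.exp (-(2*h*q) * ((k:ℝ)+1/2)^2) := by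
    intro k
    simp only [hE_def]
    rw [← Real.exp_add, ← Real.exp_add]
    congr 1
    push_cast
    field_simp
    ring
  have hsumTheta : Summable (fun k : ℤ => Real.exp (-(2*h*q) * ((k:ℝ)+1/2)^2)) :=
    summable_exp_shift ht0 (1/2)
  have hsumg : Summable (fun k : ℤ => E k * E (k+1)) :=
    (hsumTheta.mul_left _).congr (fun k => (hgform k).symm)
  have hE0 : ∀ k, 0 ≤ E k := by intro k; rw [hE_def]; exact (Real.exp_pos _).le
  have hsqrt_le_one : ∀ k : ℤ, Real.sqrt (P k * P (k+1)) ≤ 1 := by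
    intro k
    rw [show (1:ℝ) = Real.sqrt 1 by rw [Real.sqrt_one]]
    exact Real.sqrt_le_sqrt (mul_le_one₀ (hP1 k) (hP0 _) (hP1 _))
  have hs_nonneg : ∀ k : ℤ, 0 ≤ ck h q k * ck h q (k+1) := by
    intro k
    rw [hterm k]
    exact mul_nonneg (Real.sqrt_nonneg _) (mul_nonneg (hE0 k) (hE0 _))
  have hs_le : ∀ k : ℤ, ck h q k * ck h q (k+1) ≤ E k * E (k+1) := by
    intro k
    rw [hterm k]
    calc Real.sqrt (P k * P (k+1)) * (E k * E (k+1)) ≤ 1 * (E k * E (k+1)) :=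
          mul_le_mul_of_nonneg_right (hsqrt_le_one k) (mul_nonneg (hE0 k) (hE0 _))
      _ = E k * E (k+1) := one_mul _
  have hsumS : Summable (fun k : ℤ => ck h q k * ck h q (k+1)) :=
    Summable.of_nonneg_of_le hs_nonneg hs_le hsumg
  have hgap : ∀ k : ℤ, E k * E (k+1) - ck h q k * ck h q (k+1)
      ≤ 2 * Real.exp (-(a/q)) * (E k * E (k+1)) := by
    intro k
    rw [hterm k]
    have hx0 : 0 ≤ P k * P (k+1) := mul_nonneg (hP0 k) (hP0 _)
    have hx1 : P k * P (k+1) ≤ 1 := mul_le_one₀ (hP1 k) (hP0 _) (hP1 _)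
    have hsq : P k * P (k+1) ≤ Real.sqrt (P k * P (k+1)) := by
      have h1 := Real.sq_sqrt hx0
      have h2 := Real.sqrt_nonneg (P k * P (k+1))
      have h3 := hsqrt_le_one k
      nlinarith
    have hone : 1 - Real.sqrt (P k * P (k+1)) ≤ 2 * Real.exp (-(a/q)) := by
      have h4 : 1 - P k * P (k+1) ≤ (1 - P k) + (1 - P (k+1)) := by
        nlinarith [hP0 k, hP0 (k+1), hP1 k, hP1 (k+1)]
      have h5 := hPc k
      have h6 := hPc (k+1)
      linarith
    have hEnn : 0 ≤ E k * E (k+1) := mul_nonneg (hE0 k) (hE0 _)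
    nlinarith [mul_le_mul_of_nonneg_right hone hEnn]
  -- sums
  obtain ⟨Θ, hΘ_def⟩ : ∃ x : ℝ, x = ∑' k : ℤ, Real.exp (-(2*h*q) * ((k:ℝ)+1/2)^2) := ⟨_, rfl⟩
  obtain ⟨Sa, hSa_def⟩ : ∃ x : ℝ,
      x = ∑' n : ℤ, ((-1:ℝ)^n * Real.exp (-(π^2) * (n:ℝ)^2 / (2*h*q))) := ⟨_, rfl⟩
  have hΘval : Θ = Real.sqrt (π/(2*h*q)) * Sa := by
    rw [hΘ_def, hSa_def]; exact theta_half ht0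
  have halt : |Sa - 1| ≤ 4 * Real.exp (-(π^2)/(2*h*q)) := by
    rw [hSa_def]; exact alt_tail ht0 ht1
  have hGval : (∑' k : ℤ, E k * E (k+1)) = Real.exp (-(2*h/q) - h*q/2) * Θ := by
    rw [hΘ_def, ← tsum_mul_left]
    exact tsum_congr hgform
  -- numeric bounds
  have hexp_small : Real.exp (-(π^2)/(2*h*q)) ≤ Real.exp (-(a/q)) := by
    apply Real.exp_le_exp.mpr
    rw [neg_div, neg_le_neg_iff, div_le_div_iff₀ hq0 ht0]
    have h9 : (9:ℝ) ≤ π^2 := by nlinarith [Real.pi_gt_three]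
    have hA : a * (2*h) ≤ 1 := by nlinarith
    nlinarith [mul_le_mul_of_nonneg_right hA hq0.le, mul_le_mul_of_nonneg_right h9 hq0.le]
  have hexp_q : Real.exp (-(π^2)/(2*h*q)) ≤ 1/4 := by
    have h2exp : (2:ℝ) ≤ Real.exp 1 := by have := Real.add_one_le_exp (1:ℝ); linarith
    have h4exp : (4:ℝ) ≤ Real.exp 2 := by
      have hx : Real.exp 2 = Real.exp 1 * Real.exp 1 := by rw [← Real.exp_add]; norm_num
      nlinarith
    have harg : -(π^2)/(2*h*q) ≤ -2 := by
      rw [div_le_iff₀ ht0]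
      nlinarith [Real.pi_gt_three]
    have hprod : Real.exp (-2) * Real.exp 2 = 1 := by
      rw [Real.exp_neg]; exact inv_mul_cancel₀ (Real.exp_ne_zero 2)
    have hle2 : Real.exp (-(π^2)/(2*h*q)) ≤ Real.exp (-2) := Real.exp_le_exp.mpr harg
    have hmul : Real.exp (-2) * 4 ≤ Real.exp (-2) * Real.exp 2 :=
      mul_le_mul_of_nonneg_left h4exp (Real.exp_pos (-2)).le
    linarith
  have hSa2 : Sa ≤ 2 := by
    have h1 := (abs_le.mp halt).2
    linarith
  have hR : Real.sqrt (π/(2*h*q)) = Real.sqrt (π/(2*h)) * (1/Real.sqrt q) := by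
    rw [show π/(2*h*q) = (π/(2*h))/q from (div_div π (2*h) q).symm,
      Real.sqrt_div (by positivity) q]
    ring
  have hRnn : 0 ≤ Real.sqrt (π/(2*h*q)) := Real.sqrt_nonneg _
  have hC1 : Real.exp (-(2*h/q) - h*q/2) ≤ Real.exp (-(2*h/q)) := by
    apply Real.exp_le_exp.mpr; nlinarith
  have hCpos : 0 < Real.exp (-(2*h/q) - h*q/2) := Real.exp_pos _
  have hΘ2 : Θ ≤ 2 * Real.sqrt (π/(2*h*q)) := by
    rw [hΘval]
    nlinarith [hSa2, hRnn]
  have hΘnn : 0 ≤ Θ := by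
    rw [hΘ_def]
    exact tsum_nonneg (fun k => (Real.exp_pos _).le)
  obtain ⟨S, hS_def⟩ : ∃ x : ℝ, x = ∑' k : ℤ, ck h q k * ck h q (k+1) := ⟨_, rfl⟩
  obtain ⟨G, hG_def⟩ : ∃ x : ℝ, x = ∑' k : ℤ, E k * E (k+1) := ⟨_, rfl⟩
  have hSG : S ≤ G := by rw [hS_def, hG_def]; exact Summable.tsum_le_tsum hs_le hsumS hsumg
  have hGS : G - S ≤ 2 * Real.exp (-(a/q)) * G := by
    have h1 : G - S = ∑' k : ℤ, (E k * E (k+1) - ck h q k * ck h q (k+1)) := by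
      rw [hG_def, hS_def]; exact (Summable.tsum_sub hsumg hsumS).symm
    rw [h1, hG_def, ← tsum_mul_left]
    exact Summable.tsum_le_tsum hgap (hsumg.sub hsumS) (hsumg.mul_left _)
  obtain ⟨M, hM_def⟩ : ∃ x : ℝ,
      x = Real.exp (-(2 * h / q) - h * q / 2) * Real.sqrt (π / (2 * h * q)) := ⟨_, rfl⟩
  have hGM : |G - M| ≤ 4 * Real.exp (-(2*h/q)) * Real.exp (-(a/q)) * Real.sqrt (π/(2*h*q)) := by
    have h1 : G - M = Real.exp (-(2*h/q) - h*q/2) * Real.sqrt (π/(2*h*q)) * (Sa - 1) := by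
      rw [hG_def, hGval, hΘval, hM_def]; ring
    rw [h1, abs_mul, abs_of_nonneg (mul_nonneg hCpos.le hRnn)]
    have hb : |Sa - 1| ≤ 4 * Real.exp (-(a/q)) := by
      calc |Sa - 1| ≤ 4 * Real.exp (-(π^2)/(2*h*q)) := halt
        _ ≤ 4 * Real.exp (-(a/q)) := by linarith
    calc Real.exp (-(2*h/q) - h*q/2) * Real.sqrt (π/(2*h*q)) * |Sa - 1|
        ≤ Real.exp (-(2*h/q)) * Real.sqrt (π/(2*h*q)) * (4 * Real.exp (-(a/q))) := by
          have := mul_le_mul (mul_le_mul_of_nonneg_right hC1 hRnn) hb (abs_nonneg _)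
            (by positivity)
          linarith [this]
      _ = 4 * Real.exp (-(2*h/q)) * Real.exp (-(a/q)) * Real.sqrt (π/(2*h*q)) := by ring
  have hSGbound : |S - G| ≤ 4 * Real.exp (-(2*h/q)) * Real.exp (-(a/q)) * Real.sqrt (π/(2*h*q)) := by
    rw [abs_sub_comm, abs_of_nonneg (by linarith)]
    have hG_le : G ≤ Real.exp (-(2*h/q)) * (2 * Real.sqrt (π/(2*h*q))) := by
      rw [hG_def, hGval]
      exact mul_le_mul hC1 hΘ2 hΘnn (Real.exp_pos _).le
    calc G - S ≤ 2 * Real.exp (-(a/q)) * G := hGS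
      _ ≤ 2 * Real.exp (-(a/q)) * (Real.exp (-(2*h/q)) * (2 * Real.sqrt (π/(2*h*q)))) := by
          apply mul_le_mul_of_nonneg_left hG_le (by positivity)
      _ = 4 * Real.exp (-(2*h/q)) * Real.exp (-(a/q)) * Real.sqrt (π/(2*h*q)) := by ring
  have hfinal : |S - M| ≤ 8 * Real.exp (-(2*h/q)) * Real.exp (-(a/q)) * Real.sqrt (π/(2*h*q)) := by
    calc |S - M| ≤ |S - G| + |G - M| := abs_sub_le S G M
      _ ≤ 8 * Real.exp (-(2*h/q)) * Real.exp (-(a/q)) * Real.sqrt (π/(2*h*q)) := by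
          linarith [hSGbound, hGM]
  have hrhs : 8 * Real.exp (-(2*h/q)) * Real.exp (-(a/q)) * Real.sqrt (π/(2*h*q))
      = 8 * Real.sqrt (π/(2*h)) * (1 / Real.sqrt q) *
        Real.exp (-(2 * h / q) - 2 * h ^ 2 / (q * (1 - h))) := by
    have hePP : Real.exp (-(2*h/q)) * Real.exp (-(a/q))
        = Real.exp (-(2 * h / q) - 2 * h ^ 2 / (q * (1 - h))) := by
      rw [← Real.exp_add]
      congr 1
      rw [ha_def]
      field_simp
      ring
    rw [hR, show 8 * Real.exp (-(2*h/q)) * Real.exp (-(a/q)) *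
          (Real.sqrt (π/(2*h)) * (1/Real.sqrt q))
        = 8 * Real.sqrt (π/(2*h)) * (1/Real.sqrt q) *
          (Real.exp (-(2*h/q)) * Real.exp (-(a/q))) from by ring, hePP]
  rw [hrhs] at hfinal
  rw [← hS_def, ← hM_def]
  exact hfinal

end MainSec
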